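/- Let a ∈ (0, π − σ]. Suppose u, f are as in the context (u is 2π-periodic, twice continuously differentiable, f = −u'' + i·q·W·u − E·u) for some q > 0 and E ∈ ℝ, and additionally f(x) = 0 for every x ∈ [−π,π] with |x| < σ + a. Then ∫_{−π}^{π} |f|·|u| ≤ C₀ · a^{−β} · q⁻¹ · ∫_{−π}^{π} |f|². -/

import Mathlib

open Real MeasureTheory intervalIntegral

/-- The model damping profile `V(x) = 0` for `|x| ≤ σ`, `V(x) = (|x| - σ)^β` otherwise
(used only on the period `[-π, π]`). -/
noncomputable def dampV (σ β : ℝ) (x : ℝ) : ℝ :=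
  if |x| ≤ σ then 0 else (|x| - σ) ^ β

/-!
Integrating `Im (f ū)` over a period, the term `-u'' ū` contributes `Im ∫ u'' ū = Im [u' ū] = 0`
by periodicity, which leaves the energy estimate `q ∫ W |u|² ≤ ∫ |f| |u|`. Where `f ≠ 0` we have
`|x| ≥ σ + a`, hence `W ≥ m := a^β / C₀`, and Young's inequality with weight `q m` gives
`|f| |u| ≤ |f|² / (2 q m) + q W |u|² / 2` pointwise. Integrating and using the energy estimate, half
of `∫ |f| |u|` is absorbed into the left-hand side.
-/

open ComplexConjugate

theorem Function.Periodic.deriv {u : ℝ → ℂ} {c : ℝ} (hu : Function.Periodic u c) :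
    Function.Periodic (deriv u) c := fun x => by
  rw [← deriv_comp_add_const, hu.funext]

theorem Continuous.intervalIntegrable_of_norm_le {F : Type*} [NormedAddCommGroup F]
    {g : ℝ → F} {φ : ℝ → ℝ} (hφ : Continuous φ) (hg : AEStronglyMeasurable g volume)
    (h : ∀ x, ‖g x‖ ≤ φ x) (a b : ℝ) : IntervalIntegrable g volume a b :=
  (hφ.intervalIntegrable a b).mono_fun' hg.restrict (ae_of_all _ h)

theorem hasDerivAt_im_deriv_mul_conj {u : ℝ → ℂ} (hu : ContDiff ℝ 2 u) (x : ℝ) :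
    HasDerivAt (fun y => (deriv u y * conj (u y)).im) (deriv (deriv u) x * conj (u x)).im x := by
  have h₀ : HasDerivAt u (deriv u x) x := (hu.differentiable (by norm_num) x).hasDerivAt
  have h₁ : HasDerivAt (deriv u) (deriv (deriv u) x) x :=
    ((hu.iterate_deriv' 1 1).differentiable (by norm_num) x).hasDerivAt
  -- `(u' ū)' = u'' ū + |u'|²`, and the last term is real
  refine (Complex.imCLM.hasFDerivAt.comp_hasDerivAt x (h₁.mul h₀.star)).congr_deriv ?_
  simp only [RCLike.star_def, Complex.imCLM_apply, Complex.add_im, Complex.mul_im,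
    Complex.conj_im, Complex.conj_re, mul_neg, add_eq_left]
  ring

theorem integral_im_deriv_deriv_mul_conj_eq_zero {u : ℝ → ℂ} (hu : ContDiff ℝ 2 u) {a b : ℝ}
    (hu_ab : u b = u a) (hu'_ab : deriv u b = deriv u a) :
    ∫ x in a..b, (deriv (deriv u) x * conj (u x)).im = 0 := by
  have hcont : Continuous fun x => (deriv (deriv u) x * conj (u x)).im :=
    Complex.continuous_im.comp
      ((hu.iterate_deriv' 0 2).continuous.mul (Complex.continuous_conj.comp hu.continuous))
  rw [integral_eq_sub_of_hasDerivAt (fun x _ => hasDerivAt_im_deriv_mul_conj hu x)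
    (hcont.intervalIntegrable a b), hu_ab, hu'_ab, sub_self]

theorem Complex.im_mul_conj_of_eq (v z : ℂ) (q w E : ℝ) :
    ((-v + I * q * w * z - E * z) * conj z).im = q * (w * ‖z‖ ^ 2) - (v * conj z).im := by
  rw [← Complex.normSq_eq_norm_sq, Complex.normSq_apply]
  simp only [Complex.mul_im, Complex.mul_re, Complex.add_im, Complex.add_re, Complex.sub_im,
    Complex.sub_re, Complex.neg_im, Complex.neg_re, Complex.I_re, Complex.I_im,
    Complex.ofReal_re, Complex.ofReal_im, Complex.conj_re, Complex.conj_im]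
  ring

theorem Complex.norm_neg_add_mul_sub_mul_le (v z : ℂ) (q w E : ℝ) :
    ‖-v + I * q * w * z - E * z‖ ≤ ‖v‖ + (|q * w| + |E|) * ‖z‖ := by
  calc ‖-v + I * q * w * z - E * z‖ ≤ ‖-v‖ + ‖I * q * w * z‖ + ‖(E : ℂ) * z‖ :=
        norm_sub_le_of_le (norm_add_le _ _) le_rfl
    _ = ‖v‖ + (|q * w| + |E|) * ‖z‖ := by
        simp only [norm_neg, norm_mul, Complex.norm_I, Complex.norm_real, Real.norm_eq_abs,
          abs_mul]
        ring

section Schrodinger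

variable {u f : ℝ → ℂ} {W : ℝ → ℝ} {q E : ℝ}

theorem norm_le_of_eq_schrodinger {M : ℝ} (hWM : ∀ x, |W x| ≤ M)
    (hf : ∀ x, f x = -(deriv (deriv u) x) + Complex.I * q * W x * u x - E * u x) (x : ℝ) :
    ‖f x‖ ≤ ‖deriv (deriv u) x‖ + (|q| * M + |E|) * ‖u x‖ := by
  refine (hf x ▸ Complex.norm_neg_add_mul_sub_mul_le _ _ _ _ _).trans ?_
  gcongr
  rw [abs_mul]
  exact mul_le_mul_of_nonneg_left (hWM x) (abs_nonneg q)

theorem measurable_of_eq_schrodinger (hu : ContDiff ℝ 2 u) (hWm : Measurable W)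
    (hf : ∀ x, f x = -(deriv (deriv u) x) + Complex.I * q * W x * u x - E * u x) :
    Measurable f := by
  have hu₀ : Continuous u := hu.continuous
  have hu₂ : Continuous (deriv (deriv u)) := (hu.iterate_deriv' 0 2).continuous
  rw [funext hf]
  fun_prop

theorem intervalIntegrable_norm_mul_norm_of_eq_schrodinger (hu : ContDiff ℝ 2 u)
    (hWm : Measurable W) {M : ℝ} (hWM : ∀ x, |W x| ≤ M)
    (hf : ∀ x, f x = -(deriv (deriv u) x) + Complex.I * q * W x * u x - E * u x) (a b : ℝ) :
    IntervalIntegrable (fun x => ‖f x‖ * ‖u x‖) volume a b := by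
  have hu₀ : Continuous u := hu.continuous
  have hu₂ : Continuous (deriv (deriv u)) := (hu.iterate_deriv' 0 2).continuous
  have hfm := measurable_of_eq_schrodinger hu hWm hf
  refine Continuous.intervalIntegrable_of_norm_le
    (φ := fun x => (‖deriv (deriv u) x‖ + (|q| * M + |E|) * ‖u x‖) * ‖u x‖)
    (by fun_prop) (by fun_prop) (fun x => ?_) a b
  rw [norm_mul, norm_norm, norm_norm]
  gcongr
  exact norm_le_of_eq_schrodinger hWM hf x

theorem intervalIntegrable_norm_sq_of_eq_schrodinger (hu : ContDiff ℝ 2 u)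
    (hWm : Measurable W) {M : ℝ} (hWM : ∀ x, |W x| ≤ M)
    (hf : ∀ x, f x = -(deriv (deriv u) x) + Complex.I * q * W x * u x - E * u x) (a b : ℝ) :
    IntervalIntegrable (fun x => ‖f x‖ ^ 2) volume a b := by
  have hu₀ : Continuous u := hu.continuous
  have hu₂ : Continuous (deriv (deriv u)) := (hu.iterate_deriv' 0 2).continuous
  have hfm := measurable_of_eq_schrodinger hu hWm hf
  refine Continuous.intervalIntegrable_of_norm_le
    (φ := fun x => (‖deriv (deriv u) x‖ + (|q| * M + |E|) * ‖u x‖) ^ 2)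
    (by fun_prop) (by fun_prop) (fun x => ?_) a b
  rw [norm_pow, norm_norm]
  gcongr
  exact norm_le_of_eq_schrodinger hWM hf x

theorem mul_integral_mul_norm_sq_le_integral_norm_mul_norm (hu : ContDiff ℝ 2 u)
    {a b : ℝ} (hab : a ≤ b) (hu_ab : u b = u a) (hu'_ab : deriv u b = deriv u a)
    (hW : IntervalIntegrable W volume a b)
    (hf : ∀ x, f x = -(deriv (deriv u) x) + Complex.I * q * W x * u x - E * u x)
    (hfu : IntervalIntegrable (fun x => ‖f x‖ * ‖u x‖) volume a b) :
    q * ∫ x in a..b, W x * ‖u x‖ ^ 2 ≤ ∫ x in a..b, ‖f x‖ * ‖u x‖ := by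
  have hWu : IntervalIntegrable (fun x => W x * ‖u x‖ ^ 2) volume a b :=
    hW.mul_continuousOn (hu.continuous.norm.pow 2).continuousOn
  have hu'' : IntervalIntegrable (fun x => (deriv (deriv u) x * conj (u x)).im) volume a b :=
    (Complex.continuous_im.comp ((hu.iterate_deriv' 0 2).continuous.mul
      (Complex.continuous_conj.comp hu.continuous))).intervalIntegrable a b
  calc q * ∫ x in a..b, W x * ‖u x‖ ^ 2
      = ∫ x in a..b, (q * (W x * ‖u x‖ ^ 2) - (deriv (deriv u) x * conj (u x)).im) := by
        rw [integral_sub (hWu.const_mul q) hu'', intervalIntegral.integral_const_mul,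
          integral_im_deriv_deriv_mul_conj_eq_zero hu hu_ab hu'_ab, sub_zero]
    _ ≤ ∫ x in a..b, ‖f x‖ * ‖u x‖ := by
        refine integral_mono_on hab ((hWu.const_mul q).sub hu'') hfu fun x _ => ?_
        rw [← Complex.im_mul_conj_of_eq, ← hf, ← Complex.norm_conj (u x), ← norm_mul]
        exact Complex.im_le_norm _

end Schrodinger

theorem rpow_le_dampV {σ β a x : ℝ} (ha : 0 < a) (hβ : 0 ≤ β) (hx : σ + a ≤ |x|) :
    a ^ β ≤ dampV σ β x := by
  rw [dampV, if_neg (by linarith)]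
  exact rpow_le_rpow ha.le (by linarith) hβ

theorem mul_le_sq_div_add_mul_sq_div {s t w l : ℝ} (hl : 0 < l) (hw : l ≤ w) :
    s * t ≤ s ^ 2 / (2 * l) + w * t ^ 2 / 2 := by
  have hsq : s ^ 2 / (2 * l) + l * t ^ 2 / 2 - s * t = (s - l * t) ^ 2 / (2 * l) := by
    field_simp
    ring
  nlinarith [div_nonneg (sq_nonneg (s - l * t)) (by positivity : (0 : ℝ) ≤ 2 * l),
    mul_le_mul_of_nonneg_right hw (sq_nonneg t)]

theorem integral_mul_le_inv_mul_integral_sq {g h w : ℝ → ℝ} {a b l q : ℝ} (hab : a ≤ b)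
    (hgh : IntervalIntegrable (fun x => g x * h x) volume a b)
    (hg : IntervalIntegrable (fun x => g x ^ 2) volume a b)
    (hw : IntervalIntegrable w volume a b)
    (hpt : ∀ x ∈ Set.Icc a b, g x * h x ≤ g x ^ 2 / (2 * l) + q * w x / 2)
    (hqw : q * ∫ x in a..b, w x ≤ ∫ x in a..b, g x * h x) :
    ∫ x in a..b, g x * h x ≤ l⁻¹ * ∫ x in a..b, g x ^ 2 := by
  have hint := integral_mono_on hab hgh ((hg.div_const _).add ((hw.const_mul q).div_const 2)) hpt
  rw [integral_add (hg.div_const _) ((hw.const_mul q).div_const 2), intervalIntegral.integral_div,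
    intervalIntegral.integral_div, intervalIntegral.integral_const_mul] at hint
  have hhalf : (∫ x in a..b, g x ^ 2) / (2 * l) = l⁻¹ * (∫ x in a..b, g x ^ 2) / 2 := by ring
  linarith

theorem damped_wave_fu_support_estimate_general
    (C₀ σ β : ℝ) (hC₀ : 0 < C₀) (hβ : 0 ≤ β)
    (W : ℝ → ℝ) (hWmeas : Measurable W)
    (hWbdd : ∃ M : ℝ, ∀ x : ℝ, W x ≤ M) (hWnonneg : ∀ x : ℝ, 0 ≤ W x)
    (hWV : ∀ x ∈ Set.Icc (-π) π,
      dampV σ β x / C₀ ≤ W x ∧ W x ≤ C₀ * dampV σ β x)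
    (a : ℝ) (ha : a ∈ Set.Ioc 0 (π - σ))
    (q E : ℝ) (hq : 0 < q)
    (u f : ℝ → ℂ) (hu : ContDiff ℝ 2 u) (huper : Function.Periodic u (2 * π))
    (hf : ∀ x : ℝ,
      f x = -(deriv (deriv u) x) + Complex.I * q * W x * u x - E * u x)
    (hfsupp : ∀ x ∈ Set.Icc (-π) π, |x| < σ + a → f x = 0) :
    ∫ x in (-π)..π, ‖f x‖ * ‖u x‖ ≤
      C₀ * a ^ (-β) * q⁻¹ * ∫ x in (-π)..π, ‖f x‖ ^ 2 := by
  obtain ⟨M, hM⟩ := hWbdd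
  have hWM : ∀ x, |W x| ≤ M := fun x => (abs_of_nonneg (hWnonneg x)).trans_le (hM x)
  have hπ : -π ≤ π := by linarith [pi_pos]
  have hW : IntervalIntegrable W volume (-π) π :=
    continuous_const.intervalIntegrable_of_norm_le hWmeas.aestronglyMeasurable hWM _ _
  have hfu := intervalIntegrable_norm_mul_norm_of_eq_schrodinger hu hWmeas hWM hf (-π) π
  have henergy := mul_integral_mul_norm_sq_le_integral_norm_mul_norm hu hπ
    (by convert huper (-π) using 2; ring) (by convert huper.deriv (-π) using 2; ring) hW hf hfu
  set m := a ^ β / C₀ with hm_def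
  have hm : 0 < m := div_pos (rpow_pos_of_pos ha.1 β) hC₀
  have hpt : ∀ x ∈ Set.Icc (-π) π,
      ‖f x‖ * ‖u x‖ ≤ ‖f x‖ ^ 2 / (2 * (q * m)) + q * (W x * ‖u x‖ ^ 2) / 2 := by
    intro x hx
    by_cases hsupp : σ + a ≤ |x|
    · have hmW : m ≤ W x :=
        (div_le_div_of_nonneg_right (rpow_le_dampV ha.1 hβ hsupp) hC₀.le).trans (hWV x hx).1
      have := mul_le_sq_div_add_mul_sq_div (s := ‖f x‖) (t := ‖u x‖) (mul_pos hq hm)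
        (mul_le_mul_of_nonneg_left hmW hq.le)
      linarith
    · rw [hfsupp x hx (not_le.1 hsupp), norm_zero, zero_mul]
      have := hWnonneg x
      positivity
  have hconst : C₀ * a ^ (-β) * q⁻¹ = (q * m)⁻¹ := by
    rw [rpow_neg ha.1.le, hm_def]
    field_simp
  rw [hconst]
  exact integral_mul_le_inv_mul_integral_sq hπ hfu
    (intervalIntegrable_norm_sq_of_eq_schrodinger hu hWmeas hWM hf _ _)
    (hW.mul_continuousOn (hu.continuous.norm.pow 2).continuousOn) hpt henergy

/-- If `f` vanishes on `{x ∈ [-π,π] : |x| < σ + a}`, then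
`∫ |f| |u| ≤ C₀ a^{-β} q⁻¹ ∫ |f|²`. -/
theorem damped_wave_fu_support_estimate
    (C₀ σ β : ℝ) (hC₀ : 0 < C₀) (hσ : σ ∈ Set.Ioo 0 π) (hβ : 0 ≤ β)
    (W : ℝ → ℝ) (hWper : Function.Periodic W (2 * π)) (hWmeas : Measurable W)
    (hWbdd : ∃ M : ℝ, ∀ x : ℝ, W x ≤ M) (hWnonneg : ∀ x : ℝ, 0 ≤ W x)
    (hWV : ∀ x ∈ Set.Icc (-π) π,
      dampV σ β x / C₀ ≤ W x ∧ W x ≤ C₀ * dampV σ β x)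
    (a : ℝ) (ha : a ∈ Set.Ioc 0 (π - σ))
    (q E : ℝ) (hq : 0 < q)
    (u f : ℝ → ℂ) (hu : ContDiff ℝ 2 u) (huper : Function.Periodic u (2 * π))
    (hf : ∀ x : ℝ,
      f x = -(deriv (deriv u) x) + Complex.I * q * W x * u x - E * u x)
    (hfsupp : ∀ x ∈ Set.Icc (-π) π, |x| < σ + a → f x = 0) :
    ∫ x in (-π)..π, ‖f x‖ * ‖u x‖ ≤
      C₀ * a ^ (-β) * q⁻¹ * ∫ x in (-π)..π, ‖f x‖ ^ 2 :=
  damped_wave_fu_support_estimate_general C₀ σ β hC₀ hβ W hWmeas hWbdd hWnonneg hWV a ha q E hq u f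
    hu huper hf hfsupp
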